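/- There is a universal constant C > 0 with the following property. Let Y be 2π-periodic and twice continuously differentiable from ℝ to ℝ², satisfying the well-stretched condition with constant λ > 0. For fixed τ ∈ [−π,π] \ {0}, the functions s ↦ A(s,s+τ), s ↦ B(s,s+τ), s ↦ D(s,s+τ) are differentiable in s and for every s ∈ ℝ: |∂_s A(s,s+τ)| ≤ C |τ| Q R, |∂_s B(s,s+τ)| ≤ C |τ| Q R, and |∂_s D(s,s+τ)| ≤ C |τ| R, where Q = ‖Y'‖_{L^∞(𝕋)} and R = R(s,τ) = ℳY''(s+τ) + |Y''(s+τ)|. -/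

import Mathlib

open MeasureTheory Real Filter Topology
open scoped RealInnerProductSpace ENNReal

noncomputable section

abbrev E2 : Type := EuclideanSpace ℝ (Fin 2)

/-- Counterclockwise rotation by `π/2`: `(v₁, v₂)^⊥ = (−v₂, v₁)`. -/
def perp (v : E2) : E2 := (WithLp.equiv 2 (Fin 2 → ℝ)).symm ![-(v 1), v 0]

/-- The centered Hardy–Littlewood maximal function, valued in `ℝ≥0∞`. -/
def maxFn (g : ℝ → E2) (x : ℝ) : ℝ≥0∞ :=
  ⨆ (r : ℝ) (_ : 0 < r),
    (ENNReal.ofReal (2 * r))⁻¹ * ∫⁻ y in Set.Ioc (x - r) (x + r), (‖g y‖₊ : ℝ≥0∞)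

/-- `R(s,τ) = ℳY''(s+τ) + |Y''(s+τ)|`, here as a function of the point `x = s+τ`. -/
def Rfn (g : ℝ → E2) (x : ℝ) : ℝ≥0∞ := maxFn g x + (‖g x‖₊ : ℝ≥0∞)

/-- The `L^∞(𝕋)` norm. -/
def normLinf (g : ℝ → E2) : ℝ := ⨆ s : ℝ, ‖g s‖

lemma perp_add (a b : E2) : perp (a + b) = perp a + perp b := by
  ext i; fin_cases i <;> simp [perp] <;> ring

lemma perp_smul (c : ℝ) (a : E2) : perp (c • a) = c • perp a := by
  ext i; fin_cases i <;> simp [perp, mul_comm]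

/-- `perp` as a continuous linear map. -/
def perpL : E2 →L[ℝ] E2 :=
  LinearMap.toContinuousLinearMap
    { toFun := perp, map_add' := perp_add, map_smul' := perp_smul }

@[simp] lemma perpL_apply (v : E2) : perpL v = perp v := rfl

lemma norm_perp (a : E2) : ‖perp a‖ = ‖a‖ := by
  simp only [EuclideanSpace.norm_eq, Fin.sum_univ_two, perp, Real.norm_eq_abs]
  congr 1
  simp [sq_abs]
  ring

lemma lint_le_maxFn (g : ℝ → E2) (x r : ℝ) (hr : 0 < r) :
    (∫⁻ y in Set.Ioc (x - r) (x + r), (‖g y‖₊ : ℝ≥0∞))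
      ≤ ENNReal.ofReal (2 * r) * maxFn g x := by
  set I := ∫⁻ y in Set.Ioc (x - r) (x + r), (‖g y‖₊ : ℝ≥0∞) with hI
  have h2r : ENNReal.ofReal (2 * r) ≠ 0 := by
    simp [ENNReal.ofReal_eq_zero]; linarith
  have hle : (ENNReal.ofReal (2 * r))⁻¹ * I ≤ maxFn g x :=
    le_iSup₂ (f := fun (r' : ℝ) (_ : 0 < r') =>
      (ENNReal.ofReal (2 * r'))⁻¹ * ∫⁻ y in Set.Ioc (x - r') (x + r'), (‖g y‖₊ : ℝ≥0∞)) r hr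
  calc I = ENNReal.ofReal (2 * r) * ((ENNReal.ofReal (2 * r))⁻¹ * I) := by
        rw [← mul_assoc, ENNReal.mul_inv_cancel h2r ENNReal.ofReal_ne_top, one_mul]
    _ ≤ ENNReal.ofReal (2 * r) * maxFn g x := mul_le_mul_right hle _

lemma diff_bound (Y' Y'' : ℝ → E2) (hY' : ∀ u, HasDerivAt Y' (Y'' u) u)
    (hc : Continuous Y'') (s τ : ℝ) (hτ : τ ≠ 0) :
    ENNReal.ofReal ‖Y' (s + τ) - Y' s‖ ≤ ENNReal.ofReal (2 * |τ|) * maxFn Y'' (s + τ) := by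
  have hτ0 : 0 < |τ| := abs_pos.2 hτ
  have hftc : ∫ u in s..(s + τ), Y'' u = Y' (s + τ) - Y' s :=
    intervalIntegral.integral_eq_sub_of_hasDerivAt (fun u _ => hY' u)
      (hc.intervalIntegrable s (s + τ))
  have h1 : ‖Y' (s + τ) - Y' s‖ ≤ ∫ u in Set.uIoc s (s + τ), ‖Y'' u‖ := by
    rw [← hftc]; exact intervalIntegral.norm_integral_le_integral_norm_uIoc
  have hint : IntegrableOn (fun u => ‖Y'' u‖) (Set.uIoc s (s + τ)) volume :=
    hc.norm.integrableOn_uIoc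
  have h2 : ENNReal.ofReal (∫ u in Set.uIoc s (s + τ), ‖Y'' u‖)
      = ∫⁻ u in Set.uIoc s (s + τ), (‖Y'' u‖₊ : ℝ≥0∞) := by
    rw [MeasureTheory.ofReal_integral_eq_lintegral_ofReal hint
      (Filter.Eventually.of_forall fun u => norm_nonneg _)]
    simp_rw [ofReal_norm, enorm_eq_nnnorm]
  have hsub : Set.uIoc s (s + τ) ⊆ Set.Ioc ((s + τ) - |τ|) ((s + τ) + |τ|) := by
    rw [Set.uIoc]
    have h1 := le_abs_self τ
    have h2 := neg_abs_le τ
    apply Set.Ioc_subset_Ioc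
    · apply le_min <;> linarith
    · apply max_le <;> linarith
  calc ENNReal.ofReal ‖Y' (s + τ) - Y' s‖
      ≤ ENNReal.ofReal (∫ u in Set.uIoc s (s + τ), ‖Y'' u‖) := ENNReal.ofReal_le_ofReal h1
    _ = ∫⁻ u in Set.uIoc s (s + τ), (‖Y'' u‖₊ : ℝ≥0∞) := h2
    _ ≤ ∫⁻ u in Set.Ioc ((s + τ) - |τ|) ((s + τ) + |τ|), (‖Y'' u‖₊ : ℝ≥0∞) :=
        lintegral_mono_set hsub
    _ ≤ ENNReal.ofReal (2 * |τ|) * maxFn Y'' (s + τ) := lint_le_maxFn Y'' (s + τ) |τ| hτ0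

/-- Estimates for the `s`-derivatives of
`A(s,s+τ) = Y'(s+τ)·(Y(s+τ)−Y(s))`, `B(s,s+τ) = Y'(s+τ)·(Y(s+τ)−Y(s))^⊥`, and
`D(s,s+τ) = |Y(s+τ)−Y(s)|` at fixed `τ ≠ 0`. -/
theorem statement5 :
    ∃ C : ℝ, 0 < C ∧
      ∀ (Y Y' Y'' : ℝ → E2) (lam : ℝ),
        0 < lam →
        Function.Periodic Y (2 * π) →
        -- `Y` is twice continuously differentiable
        (∀ s, HasDerivAt Y (Y' s) s) →
        (∀ s, HasDerivAt Y' (Y'' s) s) →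
        Continuous Y'' →
        -- well-stretched condition with constant `lam`
        (∀ s₁ s₂ : ℝ, |s₁ - s₂| ≤ π → lam * |s₁ - s₂| ≤ ‖Y s₁ - Y s₂‖) →
        ∀ τ : ℝ, τ ≠ 0 → |τ| ≤ π → ∀ s : ℝ,
          (∃ dA : ℝ, HasDerivAt (fun u => ⟪Y' (u + τ), Y (u + τ) - Y u⟫) dA s ∧
            ENNReal.ofReal |dA|
              ≤ ENNReal.ofReal (C * |τ| * normLinf Y') * Rfn Y'' (s + τ)) ∧
          (∃ dB : ℝ, HasDerivAt (fun u => ⟪Y' (u + τ), perp (Y (u + τ) - Y u)⟫) dB s ∧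
            ENNReal.ofReal |dB|
              ≤ ENNReal.ofReal (C * |τ| * normLinf Y') * Rfn Y'' (s + τ)) ∧
          (∃ dD : ℝ, HasDerivAt (fun u => ‖Y (u + τ) - Y u‖) dD s ∧
            ENNReal.ofReal |dD|
              ≤ ENNReal.ofReal (C * |τ|) * Rfn Y'' (s + τ)) := by
  refine ⟨4, by norm_num, ?_⟩
  intro Y Y' Y'' lam hlam hper hY hY' hY''c hws τ hτ hτπ s
  have hτ0 : 0 < |τ| := abs_pos.2 hτ
  have hY'cont : Continuous Y' :=
    continuous_iff_continuousAt.2 fun u => (hY' u).continuousAt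
  have hπ : (0 : ℝ) < 2 * π := by positivity
  have hper' : Function.Periodic Y' (2 * π) := by
    intro u
    have h1 : HasDerivAt (fun v => Y (v + 2 * π)) (Y' (u + 2 * π)) u :=
      HasDerivAt.comp_add_const u (2 * π) (hY (u + 2 * π))
    have h2 : (fun v => Y (v + 2 * π)) = Y := funext fun v => hper v
    rw [h2] at h1
    exact h1.unique (hY u)
  obtain ⟨M, hM⟩ := (isCompact_Icc (a := (0 : ℝ)) (b := 2 * π)).exists_bound_of_continuousOn
    hY'cont.continuousOn
  have hbdd : BddAbove (Set.range fun u => ‖Y' u‖) := by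
    refine ⟨M, ?_⟩
    rintro _ ⟨u, rfl⟩
    obtain ⟨y, hy, hxy⟩ := hper'.exists_mem_Ico₀ hπ u
    show ‖Y' u‖ ≤ M
    rw [hxy]
    exact hM y (Set.Ico_subset_Icc_self hy)
  have hQ : ∀ u : ℝ, ‖Y' u‖ ≤ normLinf Y' := fun u => le_ciSup hbdd u
  have hQ0 : (0 : ℝ) ≤ normLinf Y' := le_trans (norm_nonneg _) (hQ 0)
  set Q := normLinf Y' with hQdef
  set x := s + τ with hx
  have hYdiff : ‖Y x - Y s‖ ≤ Q * |τ| := by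
    have := Convex.norm_image_sub_le_of_norm_hasDerivWithin_le
      (f := Y) (f' := Y') (s := Set.univ) (C := Q)
      (fun u _ => (hY u).hasDerivWithinAt) (fun u _ => hQ u) convex_univ
      (Set.mem_univ s) (Set.mem_univ x)
    simpa [hx, Real.norm_eq_abs, add_sub_cancel_left] using this
  have hY'diff : ENNReal.ofReal ‖Y' x - Y' s‖ ≤ ENNReal.ofReal (2 * |τ|) * maxFn Y'' x :=
    diff_bound Y' Y'' hY' hY''c s τ hτ
  have hYt : HasDerivAt (fun u => Y (u + τ)) (Y' x) s :=
    HasDerivAt.comp_add_const s τ (hY x)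
  have hY't : HasDerivAt (fun u => Y' (u + τ)) (Y'' x) s :=
    HasDerivAt.comp_add_const s τ (hY' x)
  have hg : HasDerivAt (fun u => Y (u + τ) - Y u) (Y' x - Y' s) s := hYt.sub (hY s)
  have key : ∀ d : ℝ, |d| ≤ Q * ‖Y' x - Y' s‖ + (Q * |τ|) * ‖Y'' x‖ →
      ENNReal.ofReal |d| ≤ ENNReal.ofReal (4 * |τ| * Q) * Rfn Y'' x := by
    intro d hb
    have ht : (0 : ℝ) ≤ |τ| := abs_nonneg τ
    calc ENNReal.ofReal |d|
        ≤ ENNReal.ofReal (Q * ‖Y' x - Y' s‖ + (Q * |τ|) * ‖Y'' x‖) :=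
          ENNReal.ofReal_le_ofReal hb
      _ = ENNReal.ofReal Q * ENNReal.ofReal ‖Y' x - Y' s‖
            + ENNReal.ofReal (Q * |τ|) * (‖Y'' x‖₊ : ℝ≥0∞) := by
          rw [ENNReal.ofReal_add (by positivity) (by positivity), ENNReal.ofReal_mul hQ0,
            ENNReal.ofReal_mul (by positivity), ofReal_norm (Y'' x), enorm_eq_nnnorm]
      _ ≤ ENNReal.ofReal Q * (ENNReal.ofReal (2 * |τ|) * maxFn Y'' x)
            + ENNReal.ofReal (Q * |τ|) * (‖Y'' x‖₊ : ℝ≥0∞) :=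
          add_le_add_left (mul_le_mul_right hY'diff _) _
      _ = ENNReal.ofReal (Q * (2 * |τ|)) * maxFn Y'' x
            + ENNReal.ofReal (Q * |τ|) * (‖Y'' x‖₊ : ℝ≥0∞) := by
          rw [← mul_assoc, ← ENNReal.ofReal_mul hQ0]
      _ ≤ ENNReal.ofReal (4 * |τ| * Q) * maxFn Y'' x
            + ENNReal.ofReal (4 * |τ| * Q) * (‖Y'' x‖₊ : ℝ≥0∞) :=
          add_le_add
            (mul_le_mul_left (ENNReal.ofReal_le_ofReal (by nlinarith)) _)
            (mul_le_mul_left (ENNReal.ofReal_le_ofReal (by nlinarith)) _)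
      _ = ENNReal.ofReal (4 * |τ| * Q) * Rfn Y'' x := by rw [Rfn, mul_add]
  have hA : HasDerivAt (fun u => ⟪Y' (u + τ), Y (u + τ) - Y u⟫)
      (⟪Y' x, Y' x - Y' s⟫ + ⟪Y'' x, Y x - Y s⟫) s := HasDerivAt.inner ℝ hY't hg
  refine ⟨⟨_, hA, ?_⟩, ?_, ?_⟩
  · -- A bound
    apply key
    refine (abs_add_le _ _).trans (add_le_add ?_ ?_)
    · exact (abs_real_inner_le_norm _ _).trans
        (mul_le_mul_of_nonneg_right (hQ x) (norm_nonneg _))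
    · calc |⟪Y'' x, Y x - Y s⟫| ≤ ‖Y'' x‖ * ‖Y x - Y s‖ := abs_real_inner_le_norm _ _
        _ ≤ ‖Y'' x‖ * (Q * |τ|) := mul_le_mul_of_nonneg_left hYdiff (norm_nonneg _)
        _ = (Q * |τ|) * ‖Y'' x‖ := mul_comm _ _
  · -- B derivative
    have hgp : HasDerivAt (fun u => perp (Y (u + τ) - Y u)) (perp (Y' x - Y' s)) s := by
      have := HasFDerivAt.comp_hasDerivAt (l := ⇑perpL) (x := s)
        (perpL.hasFDerivAt) hg
      simpa [Function.comp_def] using this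
    refine ⟨_, HasDerivAt.inner ℝ hY't hgp, ?_⟩
    apply key
    refine (abs_add_le _ _).trans (add_le_add ?_ ?_)
    · refine (abs_real_inner_le_norm _ _).trans ?_
      rw [norm_perp]
      exact mul_le_mul_of_nonneg_right (hQ x) (norm_nonneg _)
    · calc |⟪Y'' x, perp (Y x - Y s)⟫| ≤ ‖Y'' x‖ * ‖perp (Y x - Y s)‖ :=
          abs_real_inner_le_norm _ _
        _ ≤ ‖Y'' x‖ * (Q * |τ|) := by
            rw [norm_perp]; exact mul_le_mul_of_nonneg_left hYdiff (norm_nonneg _)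
        _ = (Q * |τ|) * ‖Y'' x‖ := mul_comm _ _
  · -- D derivative
    have hfs : Y x - Y s ≠ 0 := by
      have hxs : |x - s| ≤ π := by rw [hx, add_sub_cancel_left]; exact hτπ
      have hws' := hws x s hxs
      rw [hx, add_sub_cancel_left] at hws'
      intro h
      rw [h, norm_zero] at hws'
      nlinarith
    have hgsne : ⟪Y x - Y s, Y x - Y s⟫ ≠ 0 := by
      rw [real_inner_self_eq_norm_sq]
      exact pow_ne_zero 2 (norm_ne_zero_iff.2 hfs)
    have hD0 := ((HasDerivAt.inner ℝ hg hg).sqrt hgsne)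
    have heq : (fun u => Real.sqrt ⟪Y (u + τ) - Y u, Y (u + τ) - Y u⟫)
        = fun u => ‖Y (u + τ) - Y u‖ :=
      funext fun u => by rw [real_inner_self_eq_norm_sq, Real.sqrt_sq (norm_nonneg _)]
    rw [heq] at hD0
    refine ⟨_, hD0, ?_⟩
    have hfs : Y x - Y s ≠ 0 := by
      have hxs : |x - s| ≤ π := by rw [hx, add_sub_cancel_left]; exact hτπ
      have hws' := hws x s hxs
      rw [hx, add_sub_cancel_left] at hws'
      intro h
      rw [h, norm_zero] at hws'
      nlinarith
    have hn : 0 < ‖Y x - Y s‖ := norm_pos_iff.2 hfs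
    have hsq : Real.sqrt ⟪Y x - Y s, Y x - Y s⟫ = ‖Y x - Y s‖ := by
      rw [real_inner_self_eq_norm_sq, Real.sqrt_sq (norm_nonneg _)]
    have hDb : |(⟪Y x - Y s, Y' x - Y' s⟫ + ⟪Y' x - Y' s, Y x - Y s⟫)
        / (2 * Real.sqrt ⟪Y x - Y s, Y x - Y s⟫)| ≤ ‖Y' x - Y' s‖ := by
      rw [hsq, real_inner_comm (Y' x - Y' s) (Y x - Y s), abs_div,
        abs_of_pos (by positivity : (0 : ℝ) < 2 * ‖Y x - Y s‖),
        div_le_iff₀ (by positivity : (0 : ℝ) < 2 * ‖Y x - Y s‖)]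
      calc |⟪Y' x - Y' s, Y x - Y s⟫ + ⟪Y' x - Y' s, Y x - Y s⟫|
          = 2 * |⟪Y' x - Y' s, Y x - Y s⟫| := by rw [← two_mul, abs_mul]; norm_num
        _ ≤ 2 * (‖Y' x - Y' s‖ * ‖Y x - Y s‖) := by
            have := abs_real_inner_le_norm (Y' x - Y' s) (Y x - Y s)
            linarith
        _ = ‖Y' x - Y' s‖ * (2 * ‖Y x - Y s‖) := by ring
    calc ENNReal.ofReal |(⟪Y x - Y s, Y' x - Y' s⟫ + ⟪Y' x - Y' s, Y x - Y s⟫)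
          / (2 * Real.sqrt ⟪Y x - Y s, Y x - Y s⟫)|
        ≤ ENNReal.ofReal ‖Y' x - Y' s‖ := ENNReal.ofReal_le_ofReal hDb
      _ ≤ ENNReal.ofReal (2 * |τ|) * maxFn Y'' x := hY'diff
      _ ≤ ENNReal.ofReal (4 * |τ|) * Rfn Y'' x :=
          mul_le_mul' (ENNReal.ofReal_le_ofReal (by linarith [abs_nonneg τ]))
            (self_le_add_right _ _)
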